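/- arXiv:math/0206265 — 3 statements merged into one kernel-verified Lean document; each statement's English description precedes it below -/
import Mathlib

section
/- Let $H$ be a reductive group acting faithfully on a finite-dimensional symplectic vector space $V$ preserving the symplectic form. If the algebra of $H$-invariant polynomial functions on $V$ consists only of constants, then the center of $H$ is finite and hence $H$ is semisimple. -/
open Module

variable (k : Type*) [Field k]

/-- The algebra of polynomial functions on a finite-dimensional vector space `V`:
the subalgebra of `V → k` generated by the linear functionals. -/
def polyFun (V : Type*) [AddCommGroup V] [Module k V] : Subalgebra k (V → k) :=
  Algebra.adjoin k {f : V → k | ∃ φ : Module.Dual k V, f = ⇑φ}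

variable {V : Type*} [AddCommGroup V] [Module k V]

/-- The symplectic group of a symplectic form `ω` on `V`, as a subgroup of `GL(V)`. -/
def Sp (ω : V →ₗ[k] V →ₗ[k] k) : Subgroup (V ≃ₗ[k] V) where
  carrier := {g | ∀ v w : V, ω (g v) (g w) = ω v w}
  mul_mem' := by
    intro a b ha hb v w
    exact (ha (b v) (b w)).trans (hb v w)
  one_mem' := by intro v w; rfl
  inv_mem' := by
    intro a ha v w
    have h1 : a ((a⁻¹ : V ≃ₗ[k] V) v) = v := a.apply_symm_apply v
    have h2 : a ((a⁻¹ : V ≃ₗ[k] V) w) = w := a.apply_symm_apply w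
    have h3 := ha ((a⁻¹ : V ≃ₗ[k] V) v) ((a⁻¹ : V ≃ₗ[k] V) w)
    rw [h1, h2] at h3
    exact h3.symm

/-- `H ≤ GL(V)` is Zariski closed (inside `End V`; this is the appropriate notion for
subgroups of the symplectic group, which is itself closed in `End V`). -/
def IsZariskiClosed (H : Subgroup (V ≃ₗ[k] V)) : Prop :=
  ∀ g : V ≃ₗ[k] V,
    (∀ p ∈ polyFun k (Module.End k V),
      (∀ h ∈ H, p (h : Module.End k V) = 0) → p (g : Module.End k V) = 0) → g ∈ H

/-- A Zariski-closed subgroup `H ≤ GL(V)` (acting faithfully on `V`) is reductive in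
characteristic zero iff its (faithful) representation on `V` is completely reducible. -/
def IsReductiveSubgroup (H : Subgroup (V ≃ₗ[k] V)) : Prop :=
  IsZariskiClosed k H ∧
    ∀ W : Submodule k V, (∀ g ∈ H, ∀ v ∈ W, g v ∈ W) →
      ∃ W' : Submodule k V, IsCompl W W' ∧ ∀ g ∈ H, ∀ v ∈ W', g v ∈ W'

/-- A linear group is semisimple if it is reductive with finite centre. -/
def IsSemisimpleSubgroup (H : Subgroup (V ≃ₗ[k] V)) : Prop :=
  IsReductiveSubgroup k H ∧ Finite (Subgroup.center H)

/-!
If `z` is central in `H`, then `v ↦ ω (z v) v` is an `H`-invariant quadratic function, hence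
zero. So `z` is skew for `ω`; being also symplectic, it satisfies `z² = 1`. Finally, a group of
involutions in `GL(V)` is finite in characteristic zero: traces of involutions take only the
values `n - 2m`, and pairing by the trace form against a basis of the span of the group
separates its elements, because an involution of trace `n = dim V` is the identity.
-/

open LinearMap

variable {k}

section Involution

variable [CharZero k] [FiniteDimensional k V]

lemma isIdempotentElem_half_one_sub {A : Type*} [Ring A] [Algebra k A] {u : A}
    (hu : u * u = 1) : IsIdempotentElem ((2⁻¹ : k) • (1 - u)) := by
  rw [IsIdempotentElem, smul_mul_smul_comm]
  simp only [sub_mul, mul_sub, hu, one_mul, mul_one]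
  module

lemma exists_trace_eq_of_mul_self_eq_one {u : Module.End k V} (hu : u * u = 1) :
    ∃ m ≤ finrank k V, trace k V u = finrank k V - 2 * m := by
  have hP := isIdempotentElem_half_one_sub (k := k) hu
  refine ⟨finrank k (range ((2⁻¹ : k) • (1 - u))), Submodule.finrank_le _, ?_⟩
  rw [← hP.isProj_range.trace, map_smul, map_sub, trace_one]
  field_simp
  ring

lemma eq_one_of_mul_self_eq_one_of_trace_eq {u : Module.End k V} (hu : u * u = 1)
    (htr : trace k V u = finrank k V) : u = 1 := by
  have hP := (isIdempotentElem_half_one_sub (k := k) hu).eq_zero_of_trace_eq_zero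
    (by rw [map_smul, map_sub, trace_one, htr, sub_self, smul_zero])
  rw [smul_eq_zero, sub_eq_zero] at hP
  exact (hP.resolve_left (by norm_num)).symm

theorem finite_of_injective_of_mul_self_eq_one {G : Type*} [Monoid G] (ρ : G →* Module.End k V)
    (hρ : Function.Injective ρ) (hG : ∀ g : G, g * g = 1) : Finite G := by
  obtain ⟨s, hs, hspan, hindep⟩ := exists_linearIndependent k (Set.range ρ)
  have : Finite s := hindep.set_finite_of_isNoetherian
  let traces : Set k := (fun m : ℕ => (finrank k V : k) - 2 * m) '' Set.Iic (finrank k V)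
  have : Finite traces := ((Set.finite_Iic _).image _).to_subtype
  have htraces (g h : G) : trace k V (ρ (g * h)) ∈ traces := by
    obtain ⟨m, hm, htr⟩ := exists_trace_eq_of_mul_self_eq_one (u := ρ (g * h))
      (by rw [← map_mul, hG, map_one])
    exact ⟨m, hm, htr.symm⟩
  let pairing (g : G) (b : s) : traces :=
    ⟨trace k V (ρ g * b), by
      obtain ⟨h, hh⟩ := hs b.2
      rw [← hh, ← map_mul]
      exact htraces g h⟩
  refine Finite.of_injective pairing fun g g' hgg' => ?_
  have hEq : Set.EqOn (trace k V ∘ₗ mulLeft k (ρ g)) (trace k V ∘ₗ mulLeft k (ρ g')) s :=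
    fun b hb => congrArg Subtype.val (congrFun hgg' ⟨b, hb⟩)
  have hmem : ρ g' ∈ Submodule.span k s := hspan ▸ Submodule.subset_span ⟨g', rfl⟩
  have htr : trace k V (ρ (g * g')) = finrank k V := by
    simpa [← map_mul, hG, trace_one] using eqOn_span' hEq hmem
  have hone : g * g' = 1 := hρ <| by
    rw [map_one]; exact eq_one_of_mul_self_eq_one_of_trace_eq (by rw [← map_mul, hG, map_one]) htr
  calc g = g * (g' * g') := by rw [hG, mul_one]
    _ = g' := by rw [← mul_assoc, hone, one_mul]

end Involution

lemma apply_self_mem_polyFun [FiniteDimensional k V] (B : V →ₗ[k] V →ₗ[k] k) :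
    (fun v => B v v) ∈ polyFun k V := by
  let b := Module.finBasis k V
  have hB : (fun v => B v v) = ∑ i, ⇑(b.coord i) * ⇑(B (b i)) := by
    funext v
    calc B v v = B (∑ i, b.repr v i • b i) v := by rw [b.sum_repr]
      _ = _ := by
        simp only [map_sum, map_smul, LinearMap.sum_apply, LinearMap.smul_apply, smul_eq_mul,
          Finset.sum_apply, Pi.mul_apply, Basis.coord_apply]
  rw [hB]
  exact Subalgebra.sum_mem _ fun i _ =>
    mul_mem (Algebra.subset_adjoin ⟨_, rfl⟩) (Algebra.subset_adjoin ⟨_, rfl⟩)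

lemma mul_self_eq_one_of_mem_Sp {ω : V →ₗ[k] V →ₗ[k] k} (halt : ω.IsAlt)
    (hsep : ω.SeparatingLeft) {g : V ≃ₗ[k] V} (hg : g ∈ Sp k ω)
    (hskew : (ω ∘ₗ (g : V →ₗ[k] V)).IsAlt) : g * g = 1 := by
  have hadj (a c : V) : ω (g a) c = ω a (g c) := by
    have h₁ := hskew.neg a c
    have h₂ := halt.neg a (g c)
    simp only [LinearMap.comp_apply, LinearEquiv.coe_coe] at h₁
    linear_combination h₂ - h₁
  ext v
  refine sub_eq_zero.mp (hsep _ fun w => ?_)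
  rw [map_sub, LinearMap.sub_apply, LinearEquiv.mul_apply, hadj, hg]
  exact sub_self _

theorem center_finite_of_no_invariants_general
    {k : Type*} [Field k] [CharZero k]
    {V : Type*} [AddCommGroup V] [Module k V] [FiniteDimensional k V]
    (ω : V →ₗ[k] V →ₗ[k] k)
    (halt : ∀ v : V, ω v v = 0)
    (hnondeg : ∀ v : V, (∀ w : V, ω v w = 0) → v = 0)
    (H : Subgroup (V ≃ₗ[k] V)) (hHSp : H ≤ Sp k ω)
    (hred : IsReductiveSubgroup k H)
    (hinv : ∀ p ∈ polyFun k V,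
      (∀ g ∈ H, ∀ v : V, p (g v) = p v) → ∃ c : k, p = Function.const V c) :
    Finite (Subgroup.center H) ∧ IsSemisimpleSubgroup k H := by
  have hsq (z : Subgroup.center H) : z * z = 1 := by
    let zV : V ≃ₗ[k] V := z
    have hinvariant : ∀ g ∈ H, ∀ v : V, ω (zV (g v)) (g v) = ω (zV v) v := by
      intro g hg v
      have hcomm : g * zV = zV * g :=
        congrArg Subtype.val (Subgroup.mem_center_iff.mp z.2 ⟨g, hg⟩)
      rw [← LinearEquiv.mul_apply, ← hcomm, LinearEquiv.mul_apply, hHSp hg]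
    obtain ⟨c, hc⟩ :=
      hinv _ (apply_self_mem_polyFun (ω ∘ₗ (zV : V →ₗ[k] V))) hinvariant
    have hc0 : c = 0 := by simpa using (congrFun hc 0).symm
    have hzV : zV * zV = 1 :=
      mul_self_eq_one_of_mem_Sp halt hnondeg (hHSp (z : H).2) fun v => by
        simpa [hc0] using congrFun hc v
    exact Subtype.ext (Subtype.ext hzV)
  have hfin : Finite (Subgroup.center H) :=
    finite_of_injective_of_mul_self_eq_one
      (LinearEquiv.automorphismGroup.toLinearMapMonoidHom.comp
        (H.subtype.comp (Subgroup.center H).subtype))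
      (LinearEquiv.toLinearMap_injective.comp (Subtype.val_injective.comp Subtype.val_injective))
      hsq
  exact ⟨hfin, hred, hfin⟩

/-- Let `H` be a reductive group acting faithfully on a finite-dimensional
symplectic vector space `(V, ω)` preserving the symplectic form, over an algebraically
closed field of characteristic zero. If the `H`-invariant polynomial functions on `V` are
all constant, then the centre of `H` is finite, and hence `H` is semisimple. -/
theorem center_finite_of_no_invariants
    {k : Type*} [Field k] [IsAlgClosed k] [CharZero k]
    {V : Type*} [AddCommGroup V] [Module k V] [FiniteDimensional k V]
    (ω : V →ₗ[k] V →ₗ[k] k)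
    (halt : ∀ v : V, ω v v = 0)
    (hnondeg : ∀ v : V, (∀ w : V, ω v w = 0) → v = 0)
    (H : Subgroup (V ≃ₗ[k] V)) (hHSp : H ≤ Sp k ω)
    (hred : IsReductiveSubgroup k H)
    (hinv : ∀ p ∈ polyFun k V,
      (∀ g ∈ H, ∀ v : V, p (g v) = p v) → ∃ c : k, p = Function.const V c) :
    Finite (Subgroup.center H) ∧ IsSemisimpleSubgroup k H :=
  center_finite_of_no_invariants_general ω halt hnondeg H hHSp hred hinv
end

section
/- (Vinberg's inequality) Let $\mathfrak{q}$ be a finite-dimensional Lie algebra over a field of characteristic zero and $\xi \in \mathfrak{q}^*$ arbitrary. Then $\mathrm{ind}\, \mathfrak{q}_\xi \ge \mathrm{ind}\, \mathfrak{q}$, where $\mathfrak{q}_\xi$ is the stabilizer of $\xi$ under the coadjoint action. -/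
/-- The stabilizer of `ξ ∈ q*` for the coadjoint action,
`q_ξ = {x ∈ q | ξ([x, q]) = 0}`, as a Lie subalgebra. -/
def coadjointStabilizer (k : Type*) [Field k] (q : Type*) [LieRing q] [LieAlgebra k q]
    (ξ : Module.Dual k q) : LieSubalgebra k q where
  carrier := {x | ∀ y : q, ξ ⁅x, y⁆ = 0}
  add_mem' := by
    intro a b ha hb y
    rw [add_lie, map_add, ha y, hb y, add_zero]
  zero_mem' := by
    intro y
    rw [zero_lie, map_zero]
  smul_mem' := by
    intro c a ha y
    rw [smul_lie, map_smul, ha y, smul_zero]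
  lie_mem' := by
    intro a b ha hb y
    rw [lie_lie, map_sub, ha ⁅b, y⁆, hb ⁅a, y⁆, sub_zero]

/-- The index of a Lie algebra: the minimal dimension of a coadjoint stabilizer
(equivalently, the transcendence degree of the field of invariant rational functions
on `q*`). -/
noncomputable def lieIndex (k : Type*) [Field k] (q : Type*) [LieRing q] [LieAlgebra k q] :
    ℕ :=
  sInf {n : ℕ | ∃ ξ : Module.Dual k q, Module.finrank k (coadjointStabilizer k q ξ) = n}

/-!
Put `B x y = ξ ⁅x, y⁆`, so that `q_ξ = ker B`, choose `ν ∈ q_ξ*` with `dim (q_ξ)_ν = ind q_ξ`,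
extend it to `η ∈ q*` and put `C x y = η ⁅x, y⁆`; then `(q_ξ)_ν` is the kernel of `C`
restricted to `ker B`. For reflexive forms, generic members of the pencil `B + s C` satisfy
`rank (B + s C) ≥ rank B + rank (C|ker B)`: join a family `w` on which `B` has an invertible
Gram matrix with a family `u` in `ker B` on which `C` has one; the Gram determinant of `B + s C`
on this family is `s ^ #u` times a polynomial in `s` whose value at `0` is
`det B(w, w) · det C(u, u) ≠ 0`, and over an infinite field some `s` avoids its roots.
Hence `ind q ≤ dim q_{ξ + s η} ≤ dim (q_ξ)_ν = ind q_ξ`.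
-/

open Module LinearMap

section BilinearForm

variable {k : Type*} [Field k] {V : Type*} [AddCommGroup V] [Module k V]

def gramMatrix (D : V →ₗ[k] V →ₗ[k] k) {ι : Type*} (x : ι → V) : Matrix ι ι k :=
  Matrix.of fun i j => D (x i) (x j)

@[simp]
lemma gramMatrix_apply (D : V →ₗ[k] V →ₗ[k] k) {ι : Type*} (x : ι → V) (i j : ι) :
    gramMatrix D x i j = D (x i) (x j) :=
  rfl

theorem card_le_finrank_range_of_det_gramMatrix_ne_zero [FiniteDimensional k V]
    (D : V →ₗ[k] V →ₗ[k] k) {ι : Type*} [Fintype ι] [DecidableEq ι] {x : ι → V}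
    (h : (gramMatrix D x).det ≠ 0) :
    Fintype.card ι ≤ finrank k (range D) := by
  let evalAt : range D →ₗ[k] ι → k :=
    (LinearMap.pi fun j => Dual.eval k V (x j)) ∘ₗ (range D).subtype
  have : LinearIndependent k (fun i => D.rangeRestrict (x i)) :=
    LinearIndependent.of_comp evalAt (Matrix.linearIndependent_rows_of_det_ne_zero h)
  exact this.fintype_card_le_finrank

theorem LinearMap.IsRefl.separatingLeft_domRestrict₁₂_of_isCompl_ker {D : V →ₗ[k] V →ₗ[k] k}
    (hD : D.IsRefl) {W : Submodule k V} (hW : IsCompl W (ker D)) :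
    (D.domRestrict₁₂ W W).SeparatingLeft := by
  rintro ⟨x, hxW⟩ hx
  have hxker : x ∈ ker D := by
    refine mem_ker.mpr (LinearMap.ext fun y => ?_)
    obtain ⟨u, hu, v, hv, rfl⟩ : ∃ u ∈ W, ∃ v ∈ ker D, u + v = y := by
      rw [← Submodule.mem_sup, hW.sup_eq_top]; exact Submodule.mem_top
    have hxu : D x u = 0 := hx ⟨u, hu⟩
    have hxv : D x v = 0 := hD v x (by rw [mem_ker.mp hv, zero_apply])
    simp [hxu, hxv]
  have hx0 : x ∈ W ⊓ ker D := ⟨hxW, hxker⟩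
  rw [hW.inf_eq_bot] at hx0
  simpa using hx0

theorem exists_det_gramMatrix_ne_zero [FiniteDimensional k V] {D : V →ₗ[k] V →ₗ[k] k}
    (hD : D.IsRefl) : ∃ u : Fin (finrank k (range D)) → V, (gramMatrix D u).det ≠ 0 := by
  obtain ⟨W, hW⟩ := Submodule.exists_isCompl (ker D)
  have hdim : finrank k W = finrank k (range D) := by
    have := Submodule.finrank_add_eq_of_isCompl hW
    have := D.finrank_range_add_finrank_ker
    omega
  let b := finBasisOfFinrankEq k W hdim
  refine ⟨fun i => b i, ?_⟩
  convert (separatingLeft_iff_det_ne_zero b).mp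
    (hD.separatingLeft_domRestrict₁₂_of_isCompl_ker hW.symm) using 2
  ext i j
  simp only [gramMatrix_apply, toMatrix₂_apply, domRestrict₁₂_apply]

theorem Matrix.exists_det_map_eval_ne_zero [Infinite k] {n : Type*} [Fintype n] [DecidableEq n]
    {M : Matrix n n (Polynomial k)} (hM : M.det ≠ 0) :
    ∃ s : k, (M.map (Polynomial.eval s)).det ≠ 0 := by
  obtain ⟨s, hs⟩ : ∃ s, M.det.eval s ≠ 0 := by
    by_contra! h
    exact hM (Polynomial.zero_of_eval_zero _ h)
  refine ⟨s, ?_⟩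
  rwa [← Polynomial.coe_evalRingHom, ← RingHom.mapMatrix_apply, ← RingHom.map_det]

noncomputable def pencilMatrix (B C : V →ₗ[k] V →ₗ[k] k) {ι : Type*} (x : ι → V) :
    Matrix ι ι (Polynomial k) :=
  Matrix.of fun i j => Polynomial.C (B (x i) (x j)) + Polynomial.X * Polynomial.C (C (x i) (x j))

theorem pencilMatrix_map_eval (B C : V →ₗ[k] V →ₗ[k] k) {ι : Type*} (x : ι → V) (s : k) :
    (pencilMatrix B C x).map (Polynomial.eval s) = gramMatrix (B + s • C) x := by
  ext i j
  simp [pencilMatrix]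
  ring

theorem det_pencilMatrix_ne_zero {B C : V →ₗ[k] V →ₗ[k] k} (hB : B.IsRefl) {r m : ℕ}
    {w : Fin r → V} {u : Fin m → ker B} (hw : (gramMatrix B w).det ≠ 0)
    (hu : (gramMatrix (C.domRestrict₁₂ (ker B) (ker B)) u).det ≠ 0) :
    (pencilMatrix B C (Sum.elim w fun a => (u a : V))).det ≠ 0 := by
  set x : Fin r ⊕ Fin m → V := Sum.elim w fun a => (u a : V)
  -- The rows indexed by `u` are divisible by `X` because `B (u a) = 0`; after dividing,
  -- the matrix at `X = 0` is block triangular with the two Gram matrices on the diagonal.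
  let M : Matrix (Fin r ⊕ Fin m) (Fin r ⊕ Fin m) (Polynomial k) :=
    Matrix.of fun i j => Sum.elim (fun a => pencilMatrix B C x (.inl a) j)
      (fun a => Polynomial.C (C (u a) (x j))) i
  have hfactor : pencilMatrix B C x =
      Matrix.diagonal (Sum.elim 1 fun _ => Polynomial.X) * M := by
    ext (a | a) j
    · simp [M, Matrix.diagonal_mul]
    · simp [M, Matrix.diagonal_mul, pencilMatrix, x]
  have hM0 : M.map (Polynomial.eval 0) = Matrix.fromBlocks (gramMatrix B w) 0
      (Matrix.of fun a b => C (u a) (w b)) (gramMatrix (C.domRestrict₁₂ (ker B) (ker B)) u) := by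
    ext (a | a) (b | b)
    · simp [M, pencilMatrix, x]
    · simp [M, pencilMatrix, x, hB (u b) (w a) (by simp)]
    · simp [M, x]
    · simp [M, x, domRestrict₁₂_apply]
  have hM : M.det ≠ 0 := fun h => by
    have := congrArg (Polynomial.eval 0) h
    rw [Polynomial.eval_zero, ← Polynomial.coe_evalRingHom, RingHom.map_det,
      RingHom.mapMatrix_apply, Polynomial.coe_evalRingHom, hM0,
      Matrix.det_fromBlocks_zero₁₂] at this
    exact mul_ne_zero hw hu this
  rw [hfactor, Matrix.det_mul, Matrix.det_diagonal, Fintype.prod_sum_type]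
  simpa using hM

theorem exists_finrank_ker_add_smul_le [Infinite k] [FiniteDimensional k V]
    {B C : V →ₗ[k] V →ₗ[k] k} (hB : B.IsRefl) (hC : C.IsRefl) :
    ∃ s : k, finrank k (ker (B + s • C)) ≤ finrank k (ker (C.domRestrict₁₂ (ker B) (ker B))) := by
  classical
  obtain ⟨w, hw⟩ := exists_det_gramMatrix_ne_zero hB
  obtain ⟨u, hu⟩ := exists_det_gramMatrix_ne_zero (hC.domRestrict (ker B))
  obtain ⟨s, hs⟩ := Matrix.exists_det_map_eval_ne_zero (det_pencilMatrix_ne_zero hB hw hu)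
  rw [pencilMatrix_map_eval] at hs
  have hrank := card_le_finrank_range_of_det_gramMatrix_ne_zero _ hs
  simp only [Fintype.card_sum, Fintype.card_fin] at hrank
  have := (B + s • C).finrank_range_add_finrank_ker
  have := B.finrank_range_add_finrank_ker
  have := (C.domRestrict₁₂ (ker B) (ker B)).finrank_range_add_finrank_ker
  exact ⟨s, by omega⟩

end BilinearForm

section Coadjoint

variable {k : Type*} [Field k] {q : Type*} [LieRing q] [LieAlgebra k q]

def coadjointForm (ξ : Module.Dual k q) : q →ₗ[k] q →ₗ[k] k :=
  (LieAlgebra.ad k q : q →ₗ[k] Module.End k q).compr₂ ξ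

@[simp]
lemma coadjointForm_apply (ξ : Module.Dual k q) (x y : q) : coadjointForm ξ x y = ξ ⁅x, y⁆ :=
  rfl

lemma coadjointForm_isRefl (ξ : Module.Dual k q) : (coadjointForm ξ).IsRefl := fun x y h => by
  rw [coadjointForm_apply, ← lie_skew, map_neg, ← coadjointForm_apply, h, neg_zero]

lemma coadjointForm_add_smul (ξ η : Module.Dual k q) (s : k) :
    coadjointForm (ξ + s • η) = coadjointForm ξ + s • coadjointForm η := by
  ext x y
  simp

lemma coadjointStabilizer_toSubmodule (ξ : Module.Dual k q) :
    (coadjointStabilizer k q ξ).toSubmodule = ker (coadjointForm ξ) := by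
  ext x
  simp only [mem_ker, LinearMap.ext_iff, coadjointForm_apply, LinearMap.zero_apply]
  rfl

lemma finrank_coadjointStabilizer (ξ : Module.Dual k q) :
    finrank k (coadjointStabilizer k q ξ) = finrank k (ker (coadjointForm ξ)) := by
  rw [← coadjointStabilizer_toSubmodule]
  rfl

lemma coadjointForm_eq_domRestrict₁₂ (a : LieSubalgebra k q) {η : Module.Dual k q}
    {ν : Module.Dual k a} (h : η ∘ₗ a.toSubmodule.subtype = ν) :
    coadjointForm ν = (coadjointForm η).domRestrict₁₂ a.toSubmodule a.toSubmodule := by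
  subst h
  rfl

lemma finrank_coadjointStabilizer_eq_finrank_ker_domRestrict₁₂ {ξ η : Module.Dual k q}
    {ν : Module.Dual k (coadjointStabilizer k q ξ)}
    (h : η ∘ₗ (coadjointStabilizer k q ξ).toSubmodule.subtype = ν) :
    finrank k (coadjointStabilizer k _ ν) =
      finrank k (ker ((coadjointForm η).domRestrict₁₂ (ker (coadjointForm ξ))
        (ker (coadjointForm ξ)))) := by
  rw [finrank_coadjointStabilizer, coadjointForm_eq_domRestrict₁₂ _ h]
  exact congrArg (fun p : Submodule k q => finrank k (ker ((coadjointForm η).domRestrict₁₂ p p)))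
    (coadjointStabilizer_toSubmodule ξ)

lemma lieIndex_le_finrank_coadjointStabilizer (ξ : Module.Dual k q) :
    lieIndex k q ≤ finrank k (coadjointStabilizer k q ξ) :=
  Nat.sInf_le ⟨ξ, rfl⟩

variable (k q) in
lemma exists_finrank_coadjointStabilizer_eq_lieIndex :
    ∃ ξ : Module.Dual k q, finrank k (coadjointStabilizer k q ξ) = lieIndex k q :=
  Nat.sInf_mem (s := {n | ∃ ξ : Module.Dual k q, finrank k (coadjointStabilizer k q ξ) = n})
    ⟨_, 0, rfl⟩

end Coadjoint

/-- **Vinberg's inequality.** For a finite-dimensional Lie algebra `q` over a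
field of characteristic zero and any `ξ ∈ q*`, one has `ind q_ξ ≥ ind q`. -/
theorem vinberg_inequality
    {k : Type*} [Field k] [CharZero k]
    {q : Type*} [LieRing q] [LieAlgebra k q] [Module.Finite k q]
    (ξ : Module.Dual k q) :
    lieIndex k (coadjointStabilizer k q ξ) ≥ lieIndex k q := by
  set a := coadjointStabilizer k q ξ
  obtain ⟨ν, hν⟩ := exists_finrank_coadjointStabilizer_eq_lieIndex k a
  obtain ⟨η, hη⟩ := LinearMap.exists_extend (p := a.toSubmodule) ν
  obtain ⟨s, hs⟩ :=
    exists_finrank_ker_add_smul_le (coadjointForm_isRefl ξ) (coadjointForm_isRefl η)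
  rw [← finrank_coadjointStabilizer_eq_finrank_ker_domRestrict₁₂ hη, hν,
    ← coadjointForm_add_smul, ← finrank_coadjointStabilizer] at hs
  exact (lieIndex_le_finrank_coadjointStabilizer (ξ + s • η)).trans hs
end

section
/- Let $\mathfrak{g}$ be a simple Lie algebra with highest root $\theta$, graded by $\mathrm{ad}\,h_\theta$, and let $F(x) = \Phi((\mathrm{ad}\,x)^4 e_{-\theta}, e_{-\theta})$ for $x \in \mathfrak{g}\langle 1\rangle_{(\theta)}$. If $x \in \mathfrak{g}\langle 1\rangle_{(\theta)}$ has height 2 (i.e., $(\mathrm{ad}\,x)^3 = 0$), then the differential of $F$ vanishes at $x$: $dF_x = 0$. -/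
/-- Let `g` be a simple Lie algebra with highest-root `sl₂`-triple
`{e_θ, h_θ, e_{-θ}}` (the highest-root vector `e = e_θ` being nonzero and extremal), graded
by `ad h_θ`, and let `F(x) = Φ((ad x)⁴ e_{-θ}, e_{-θ})` for `x ∈ g⟨1⟩`, with `Φ` the
Killing form. If `x ∈ g⟨1⟩` has height 2, i.e. `(ad x)³ = 0`, then the differential of `F`
vanishes at `x`: for all `y ∈ g⟨1⟩`,
`dF_x(y) = 2Φ((ad y)(ad x)³ e_{-θ}, e_{-θ}) + 2Φ((ad x)(ad y)(ad x)² e_{-θ}, e_{-θ}) = 0`. -/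
theorem differential_of_F_vanishes_at_height_two
    {k : Type*} [Field k] [IsAlgClosed k] [CharZero k]
    {g : Type*} [LieRing g] [LieAlgebra k g] [Module.Finite k g]
    [LieAlgebra.IsSimple k g]
    (e h f : g) (hef : ⁅e, f⁆ = h) (hhe : ⁅h, e⁆ = (2 : k) • e)
    (hhf : ⁅h, f⁆ = -((2 : k) • f))
    (he0 : e ≠ 0)
    (hextremal : ∀ z : g, ⁅e, ⁅e, z⁆⁆ ∈ (Submodule.span k {e} : Submodule k g))
    (E : ℤ → Submodule k g)
    (hE : ∀ i : ℤ, E i = Module.End.eigenspace (LieAlgebra.ad k g h) (i : k))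
    (x : g) (hx : x ∈ E 1) (hheight2 : (LieAlgebra.ad k g x) ^ 3 = 0) :
    ∀ y ∈ E 1,
      2 * killingForm k g ⁅y, ⁅x, ⁅x, ⁅x, f⁆⁆⁆⁆ f +
      2 * killingForm k g ⁅x, ⁅y, ⁅x, ⁅x, f⁆⁆⁆⁆ f = 0 := by
  intro y hy
  -- unpack eigenvector conditions
  rw [hE 1, Module.End.mem_eigenspace_iff] at hx hy
  simp only [LieAlgebra.ad_apply, Int.cast_one, one_smul] at hx hy
  -- hx : ⁅h, x⁆ = x, hy : ⁅h, y⁆ = y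
  -- (ad x)^3 = 0 pointwise
  have hx3 : ∀ w : g, ⁅x, ⁅x, ⁅x, w⁆⁆⁆ = 0 := by
    intro w
    have := LinearMap.ext_iff.mp hheight2 w
    simpa [pow_succ, Module.End.mul_apply, LieAlgebra.ad_apply] using this
  -- z := ⁅y, x⁆ is an eigenvector of ad h with eigenvalue 2
  set z : g := ⁅y, x⁆ with hz_def
  have hhz : ⁅h, z⁆ = (2 : k) • z := by
    rw [hz_def, leibniz_lie, hx, hy, two_smul]
  -- step (i): ⁅e, ⁅e, z⁆⁆ = 0
  have span_smul : ∀ (a : k) (w : g), a ≠ 0 → a • w ∈ (Submodule.span k {e} : Submodule k g) →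
      w ∈ (Submodule.span k {e} : Submodule k g) := by
    intro a w ha hw
    have := Submodule.smul_mem _ a⁻¹ hw
    rwa [smul_smul, inv_mul_cancel₀ ha, one_smul] at this
  have heez : ⁅e, ⁅e, z⁆⁆ = 0 := by
    obtain ⟨c, hc⟩ := Submodule.mem_span_singleton.mp (hextremal z)
    -- ⁅h, ⁅e,⁅e,z⁆⁆⁆ = 6 • ⁅e,⁅e,z⁆⁆
    have h1 : ⁅h, ⁅e, z⁆⁆ = (4 : k) • ⁅e, z⁆ := by
      rw [leibniz_lie, hhe, hhz, smul_lie, lie_smul]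
      module
    have h2 : ⁅h, ⁅e, ⁅e, z⁆⁆⁆ = (6 : k) • ⁅e, ⁅e, z⁆⁆ := by
      rw [leibniz_lie, hhe, h1, smul_lie, lie_smul]
      module
    have h3 : ⁅h, ⁅e, ⁅e, z⁆⁆⁆ = (2 : k) • ⁅e, ⁅e, z⁆⁆ := by
      rw [← hc, lie_smul, hhe, smul_smul, mul_comm, ← smul_smul]
    have h4 : (4 : k) • ⁅e, ⁅e, z⁆⁆ = 0 := by
      have := h2.symm.trans h3
      have : ((6 : k) - 2) • ⁅e, ⁅e, z⁆⁆ = 0 := by rw [sub_smul, this, sub_self]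
      convert this using 2; norm_num
    have h40 : (4 : k) ≠ 0 := by norm_num
    exact (smul_eq_zero.mp h4).resolve_left h40
  -- step (ii): v := ⁅e, z⁆
  set v : g := ⁅e, z⁆ with hv_def
  have hhv : ⁅h, v⁆ = (4 : k) • v := by
    rw [hv_def, leibniz_lie, hhe, hhz, smul_lie, lie_smul]; module
  have hev : ⁅e, v⁆ = 0 := heez
  -- F-chain on v
  have hhFv : ⁅h, ⁅f, v⁆⁆ = (2 : k) • ⁅f, v⁆ := by
    rw [leibniz_lie, hhf, hhv]
    simp only [neg_lie, smul_lie, lie_smul]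
    module
  have heFv : ⁅e, ⁅f, v⁆⁆ = (4 : k) • v := by
    rw [leibniz_lie, hef, hhv, hev, lie_zero, add_zero]
  have hhF2v : ⁅h, ⁅f, ⁅f, v⁆⁆⁆ = 0 := by
    rw [leibniz_lie, hhf, hhFv]
    simp only [neg_lie, smul_lie, lie_smul]
    module
  have heF2v : ⁅e, ⁅f, ⁅f, v⁆⁆⁆ = (6 : k) • ⁅f, v⁆ := by
    rw [leibniz_lie, hef, hhFv, heFv, lie_smul]
    module
  have heF3v : ⁅e, ⁅f, ⁅f, ⁅f, v⁆⁆⁆⁆ = (6 : k) • ⁅f, ⁅f, v⁆⁆ := by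
    rw [leibniz_lie, hef, hhF2v, heF2v, lie_smul, zero_add]
  have heeF3v : ⁅e, ⁅e, ⁅f, ⁅f, ⁅f, v⁆⁆⁆⁆⁆ = (36 : k) • ⁅f, v⁆ := by
    rw [heF3v, lie_smul, heF2v, smul_smul]
    norm_num
  have hFv_mem : ⁅f, v⁆ ∈ (Submodule.span k {e} : Submodule k g) := by
    apply span_smul (36 : k) _ (by norm_num)
    rw [← heeF3v]
    exact hextremal _
  -- F-chain on z
  have heFz : ⁅e, ⁅f, z⁆⁆ = (2 : k) • z + ⁅f, v⁆ := by
    rw [leibniz_lie, hef, hhz, hv_def]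
  have hhFz : ⁅h, ⁅f, z⁆⁆ = 0 := by
    rw [leibniz_lie, hhf, hhz]
    simp only [neg_lie, smul_lie, lie_smul]
    module
  have heF2z : ⁅e, ⁅f, ⁅f, z⁆⁆⁆ = (2 : k) • ⁅f, z⁆ + ⁅f, ⁅f, v⁆⁆ := by
    rw [leibniz_lie, hef, hhFz, heFz, lie_add, lie_smul, zero_add]
  have heeF2z : ⁅e, ⁅e, ⁅f, ⁅f, z⁆⁆⁆⁆ = (4 : k) • z + (8 : k) • ⁅f, v⁆ := by
    rw [heF2z, lie_add, lie_smul, heFz, heF2v]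
    module
  have hz_mem : z ∈ (Submodule.span k {e} : Submodule k g) := by
    apply span_smul (4 : k) _ (by norm_num)
    have : (4 : k) • z = ⁅e, ⁅e, ⁅f, ⁅f, z⁆⁆⁆⁆ - (8 : k) • ⁅f, v⁆ := by
      rw [heeF2z]; module
    rw [this]
    exact Submodule.sub_mem _ (hextremal _) (Submodule.smul_mem _ _ hFv_mem)
  obtain ⟨d, hd⟩ := Submodule.mem_span_singleton.mp hz_mem
  -- hd : d • e = z
  -- Now the Killing form computation
  have κlie : ∀ a b c : g, killingForm k g ⁅a, b⁆ c = - killingForm k g b ⁅a, c⁆ :=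
    fun a b c => LieModule.traceForm_apply_lie_apply' k g g a b c
  have κcomm : ∀ a b : g, killingForm k g a b = killingForm k g b a :=
    fun a b => LieModule.traceForm_comm k g g a b
  -- first term vanishes
  have hfirst : killingForm k g ⁅y, ⁅x, ⁅x, ⁅x, f⁆⁆⁆⁆ f = 0 := by
    rw [hx3 f, lie_zero]
    simp
  -- second term
  have hsecond : killingForm k g ⁅x, ⁅y, ⁅x, ⁅x, f⁆⁆⁆⁆ f = 0 := by
    have expand : ⁅y, ⁅x, ⁅x, f⁆⁆⁆ = ⁅z, ⁅x, f⁆⁆ + ⁅x, ⁅y, ⁅x, f⁆⁆⁆ :=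
      leibniz_lie y x ⁅x, f⁆
    rw [expand, lie_add, map_add, LinearMap.add_apply]
    have pieceA : killingForm k g ⁅x, ⁅z, ⁅x, f⁆⁆⁆ f = 0 := by
      rw [κlie]
      have h1 := κlie z ⁅x, f⁆ ⁅x, f⁆
      have h2 := κcomm ⁅z, ⁅x, f⁆⁆ ⁅x, f⁆
      have h3 : killingForm k g ⁅z, ⁅x, f⁆⁆ ⁅x, f⁆ = 0 := by
        have h4 : killingForm k g ⁅z, ⁅x, f⁆⁆ ⁅x, f⁆ + killingForm k g ⁅z, ⁅x, f⁆⁆ ⁅x, f⁆ = 0 := by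
          linear_combination h1 + h2
        exact add_self_eq_zero.mp h4
      rw [h3, neg_zero]
    have pieceB : killingForm k g ⁅x, ⁅x, ⁅y, ⁅x, f⁆⁆⁆⁆ f = 0 := by
      rw [κlie, κlie]
      -- κ ⁅y,⁅x,f⁆⁆ ⁅x,⁅x,f⁆⁆
      have expand2 : ⁅y, ⁅x, f⁆⁆ = ⁅z, f⁆ + ⁅x, ⁅y, f⁆⁆ := leibniz_lie y x f
      rw [expand2, map_add, LinearMap.add_apply]
      have b2 : killingForm k g ⁅x, ⁅y, f⁆⁆ ⁅x, ⁅x, f⁆⁆ = 0 := by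
        rw [κlie, hx3 f]
        simp
      have b1 : killingForm k g ⁅z, f⁆ ⁅x, ⁅x, f⁆⁆ = 0 := by
        rw [← hd, smul_lie, hef, map_smul, LinearMap.smul_apply]
        have : killingForm k g h ⁅x, ⁅x, f⁆⁆ = 0 := by
          rw [κcomm, κlie]
          have hxh : ⁅x, h⁆ = -x := by
            rw [← lie_skew, hx]
          rw [hxh]
          have : killingForm k g ⁅x, f⁆ (-x) = - killingForm k g ⁅x, f⁆ x := by
            simp
          rw [this, κlie, lie_self]
          simp
        rw [this, smul_zero]
      rw [b1, b2]
      ring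
    rw [pieceA, pieceB]
    ring
  rw [hfirst, hsecond]
  ring
end
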